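/- For all n ≥ 3, c(n) := a(n-1) satisfies c(n) = 3n/16 - 3/64 - (ψ(n-3) + 3ψ(n-2))/2^(n+3). -/

import Mathlib

/-!
Both `a` and `i` grow linearly with slope `3 / 16`, up to an error that is a combination of two
consecutive terms of `ψ` divided by a power of two. One guesses such closed forms for `a (k + 2)`
and `i (k + 2)`, checks that they satisfy the two recurrences (the error terms match after
eliminating `ψ (k + 2)`, `ψ (k + 3)`, `ψ (k + 4)` through the recurrence of `ψ`), and concludes
by induction from the initial values `a 2, i 2, i 3, i 4`.
-/

namespace LongTrap

variable {ψ : ℕ → ℤ}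

-- The closed forms of `a (k + 2)` and `i (k + 2)`.
def closedA (ψ : ℕ → ℤ) (k : ℕ) : ℚ :=
  3 * (k + 3) / 16 - 3 / 64 - ((ψ k : ℚ) + 3 * ψ (k + 1)) / 2 ^ (k + 6)

def closedI (ψ : ℕ → ℤ) (k : ℕ) : ℚ :=
  3 * (k + 5) / 16 - 3 / 64 + (7 * (ψ k : ℚ) + 5 * ψ (k + 1)) / 2 ^ (k + 6)

lemma closedA_succ {k : ℕ} (h : ψ (k + 2) = -2 * ψ k - ψ (k + 1)) :
    closedA ψ (k + 1) = (closedI ψ k + closedA ψ k) / 2 := by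
  simp only [closedA, closedI, h, pow_succ]
  push_cast
  field_simp
  ring

lemma closedI_add_three (hψ : ∀ k, ψ (k + 2) = -2 * ψ k - ψ (k + 1)) (k : ℕ) :
    closedI ψ (k + 3) = (3 / 2 + closedI ψ k + closedA ψ k) / 2 := by
  simp only [closedA, closedI, hψ, pow_succ]
  push_cast
  field_simp
  ring

lemma closedA_zero (hψ0 : ψ 0 = 1) (hψ1 : ψ 1 = 0) : closedA ψ 0 = 1 / 2 := by
  norm_num [closedA, hψ0, hψ1]

lemma closedI_zero (hψ0 : ψ 0 = 1) (hψ1 : ψ 1 = 0) : closedI ψ 0 = 1 := by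
  norm_num [closedI, hψ0, hψ1]

lemma closedI_one (hψ : ∀ k, ψ (k + 2) = -2 * ψ k - ψ (k + 1)) (hψ0 : ψ 0 = 1) (hψ1 : ψ 1 = 0) :
    closedI ψ 1 = 1 := by
  norm_num [closedI, hψ 0, hψ0, hψ1]

lemma closedI_two (hψ : ∀ k, ψ (k + 2) = -2 * ψ k - ψ (k + 1)) (hψ0 : ψ 0 = 1) (hψ1 : ψ 1 = 0) :
    closedI ψ 2 = 5 / 4 := by
  norm_num [closedI, hψ 1, hψ 0, hψ0, hψ1]

theorem eq_closedA_and_closedI_of_rec (hψ : ∀ k, ψ (k + 2) = -2 * ψ k - ψ (k + 1))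
    (hψ0 : ψ 0 = 1) (hψ1 : ψ 1 = 0) {u v : ℕ → ℚ}
    (hu : ∀ k, u (k + 1) = (v k + u k) / 2)
    (hv : ∀ k, v (k + 3) = (v 0 + u 0 + v k + u k) / 2)
    (hu0 : u 0 = 1 / 2) (hv0 : v 0 = 1) (hv1 : v 1 = 1) (hv2 : v 2 = 5 / 4) (k : ℕ) :
    u k = closedA ψ k ∧ v k = closedI ψ k := by
  let P k := u k = closedA ψ k ∧ v k = closedI ψ k
  have hu_succ {k} (h : P k) : u (k + 1) = closedA ψ (k + 1) := by
    rw [hu, h.1, h.2, closedA_succ (hψ k)]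
  have hP0 : P 0 := ⟨hu0.trans (closedA_zero hψ0 hψ1).symm, hv0.trans (closedI_zero hψ0 hψ1).symm⟩
  have hP1 : P 1 := ⟨hu_succ hP0, hv1.trans (closedI_one hψ hψ0 hψ1).symm⟩
  have hP2 : P 2 := ⟨hu_succ hP1, hv2.trans (closedI_two hψ hψ0 hψ1).symm⟩
  suffices ∀ k, P k ∧ P (k + 1) ∧ P (k + 2) from (this k).1
  intro k
  induction k with
  | zero => exact ⟨hP0, hP1, hP2⟩
  | succ k ih =>
    obtain ⟨hk, hk1, hk2⟩ := ih
    refine ⟨hk1, hk2, hu_succ hk2, ?_⟩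
    rw [hv, hk.1, hk.2, hv0, hu0, closedI_add_three hψ]
    norm_num

end LongTrap

open LongTrap in
theorem stmt_5_general
    (psi : ℕ → ℤ)
    (hpsi0 : psi 0 = 1) (hpsi1 : psi 1 = 0)
    (hpsi : ∀ n : ℕ, 2 ≤ n → psi n = -2 * psi (n - 2) - psi (n - 1))
    (i a : ℕ → ℚ)
    (hi1 : i 1 = 1) (ha1 : a 1 = 0)
    (ha : ∀ n : ℕ, 2 ≤ n → a n = (i (n - 1) + a (n - 1)) / 2)
    (hi23 : ∀ n : ℕ, 2 ≤ n → n ≤ 3 → i n = i (n - 1))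
    (hi4 : i 4 = (i 1 + a 1 + i 2 + a 2) / 2)
    (hi5 : ∀ n : ℕ, 5 ≤ n → i n = (i 2 + a 2 + i (n - 3) + a (n - 3)) / 2) :
    ∀ n : ℕ, 3 ≤ n →
      a (n - 1) = 3 * n / 16 - 3 / 64 - ((psi (n - 3) : ℚ) + 3 * psi (n - 2)) / 2 ^ (n + 3) := by
  have hψ (k : ℕ) : psi (k + 2) = -2 * psi k - psi (k + 1) := hpsi (k + 2) (by omega)
  have hu (k : ℕ) : a (k + 3) = (i (k + 2) + a (k + 2)) / 2 := ha (k + 3) (by omega)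
  have hv (k : ℕ) : i (k + 5) = (i 2 + a 2 + i (k + 2) + a (k + 2)) / 2 := hi5 (k + 5) (by omega)
  have hi2 : i 2 = 1 := (hi23 2 le_rfl (by omega)).trans hi1
  have ha2 : a 2 = 1 / 2 := by rw [ha 2 le_rfl, hi1, ha1]; norm_num
  have hi3 : i 3 = 1 := (hi23 3 (by omega) le_rfl).trans hi2
  have hi4' : i 4 = 5 / 4 := by rw [hi4, hi1, ha1, hi2, ha2]; norm_num
  intro n hn
  obtain ⟨m, rfl⟩ : ∃ m, n = m + 3 := ⟨n - 3, by omega⟩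
  have hclosed := (eq_closedA_and_closedI_of_rec (u := fun k ↦ a (k + 2)) (v := fun k ↦ i (k + 2))
    hψ hpsi0 hpsi1 hu hv ha2 hi2 hi3 hi4' m).1
  simp only [Nat.add_sub_cancel, show m + 3 - 1 = m + 2 by omega, show m + 3 - 2 = m + 1 by omega,
    hclosed, closedA]
  push_cast
  ring_nf

theorem stmt_5
    (psi : ℕ → ℤ)
    (hpsi0 : psi 0 = 1) (hpsi1 : psi 1 = 0)
    (hpsi : ∀ n : ℕ, 2 ≤ n → psi n = -2 * psi (n - 2) - psi (n - 1))
    (i a : ℕ → ℚ)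
    (ha0 : a 0 = 0) (hi1 : i 1 = 1) (ha1 : a 1 = 0)
    (ha : ∀ n : ℕ, 2 ≤ n → a n = (i (n - 1) + a (n - 1)) / 2)
    (hi23 : ∀ n : ℕ, 2 ≤ n → n ≤ 3 → i n = i (n - 1))
    (hi4 : i 4 = (i 1 + a 1 + i 2 + a 2) / 2)
    (hi5 : ∀ n : ℕ, 5 ≤ n → i n = (i 2 + a 2 + i (n - 3) + a (n - 3)) / 2) :
    ∀ n : ℕ, 3 ≤ n →
      a (n - 1) = 3 * n / 16 - 3 / 64 - ((psi (n - 3) : ℚ) + 3 * psi (n - 2)) / 2 ^ (n + 3) :=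
  stmt_5_general psi hpsi0 hpsi1 hpsi i a hi1 ha1 ha hi23 hi4 hi5
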